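/- arXiv:2401.03999 — 3 statements merged into one kernel-verified Lean document; each statement's English description precedes it below -/
import Mathlib

section
/- If there exists a real symmetric positive semidefinite matrix X with 𝒜X = b and tr(X) ≤ α, then y = 0 is a global minimizer of the penalized dual objective f, i.e. f(0) ≤ f(y) for all y ∈ ℝ^m. -/
open Matrix

open scoped Classical in
/-- Maximum eigenvalue of a real symmetric (Hermitian) matrix. -/
noncomputable def lambdaMax {n : ℕ} (M : Matrix (Fin n) (Fin n) ℝ) : ℝ :=
  if h : M.IsHermitian then ⨆ i, h.eigenvalues i else 0

/-- Frobenius (trace) inner product of real matrices. -/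
def frob {n : ℕ} (A B : Matrix (Fin n) (Fin n) ℝ) : ℝ := (Aᵀ * B).trace

/-- The penalized dual objective
`f(y) = α·max{λ_max(−𝒜*y), 0} + ⟨b, y⟩`, where `𝒜*y = Σ_i y_i A_i`. -/
noncomputable def penDual {n m : ℕ} (A : Fin m → Matrix (Fin n) (Fin n) ℝ)
    (b : Fin m → ℝ) (α : ℝ) (y : Fin m → ℝ) : ℝ :=
  α * max (lambdaMax (-(∑ i, y i • A i))) 0 + b ⬝ᵥ y

/-!
Weak duality. For a feasible `X` and any `y`, `⟨b, y⟩ = tr((𝒜*y) X)`, and since `X ⪰ 0` the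
matrix inequality `-𝒜*y ≤ λ_max(-𝒜*y) • 1` gives `-tr((𝒜*y) X) ≤ λ_max(-𝒜*y) tr X`.
With `0 ≤ tr X ≤ α` this bounds `-⟨b, y⟩` by `α · max{λ_max(-𝒜*y), 0}`, i.e. `f(y) ≥ 0 = f(0)`.
-/

open scoped MatrixOrder ComplexOrder

namespace Matrix

variable {n 𝕜 : Type*} [Fintype n] [DecidableEq n] [RCLike 𝕜]

lemma PosSemidef.trace_mul_nonneg {P X : Matrix n n 𝕜} (hP : P.PosSemidef) (hX : X.PosSemidef) :
    0 ≤ (P * X).trace := by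
  obtain ⟨B, rfl⟩ := CStarAlgebra.nonneg_iff_eq_star_mul_self.mp hP.nonneg
  rw [star_eq_conjTranspose, Matrix.mul_assoc, trace_mul_comm]
  exact (hX.mul_mul_conjTranspose_same B).trace_nonneg

lemma trace_mul_le_trace_mul_of_le {M N X : Matrix n n 𝕜} (hMN : M ≤ N) (hX : X.PosSemidef) :
    (M * X).trace ≤ (N * X).trace := by
  have := (le_iff.mp hMN).trace_mul_nonneg hX
  rwa [Matrix.sub_mul, trace_sub, sub_nonneg] at this

lemma IsHermitian.le_algebraMap_of_eigenvalues_le {M : Matrix n n 𝕜} (hM : M.IsHermitian)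
    {t : ℝ} (ht : ∀ i, hM.eigenvalues i ≤ t) : M ≤ algebraMap ℝ _ t :=
  le_algebraMap_of_spectrum_le (by
    rw [hM.spectrum_real_eq_range_eigenvalues]
    rintro _ ⟨i, rfl⟩
    exact ht i) hM.isSelfAdjoint

end Matrix

lemma lambdaMax_zero {n : ℕ} : lambdaMax (0 : Matrix (Fin n) (Fin n) ℝ) = 0 := by
  rw [lambdaMax, dif_pos isHermitian_zero]
  simp [isHermitian_zero.eigenvalues_eq_zero_iff.mpr rfl]

lemma eigenvalues_le_lambdaMax {n : ℕ} {M : Matrix (Fin n) (Fin n) ℝ} (hM : M.IsHermitian)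
    (i : Fin n) : hM.eigenvalues i ≤ lambdaMax M := by
  rw [lambdaMax, dif_pos hM]
  exact le_ciSup (Set.finite_range _).bddAbove i

lemma trace_mul_le_lambdaMax_mul_trace {n : ℕ} {M X : Matrix (Fin n) (Fin n) ℝ}
    (hM : M.IsHermitian) (hX : X.PosSemidef) : (M * X).trace ≤ lambdaMax M * X.trace := by
  calc (M * X).trace ≤ (algebraMap ℝ _ (lambdaMax M) * X).trace :=
        trace_mul_le_trace_mul_of_le
          (hM.le_algebraMap_of_eigenvalues_le (eigenvalues_le_lambdaMax hM)) hX
    _ = lambdaMax M * X.trace := by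
        rw [Algebra.algebraMap_eq_smul_one, Matrix.smul_mul, Matrix.one_mul, trace_smul,
          smul_eq_mul]

lemma frob_eq_trace_mul {n : ℕ} {S : Matrix (Fin n) (Fin n) ℝ} (hS : S.IsSymm)
    (X : Matrix (Fin n) (Fin n) ℝ) : frob S X = (S * X).trace := by
  rw [frob, hS.eq]

lemma frob_sum_smul_left {n m : ℕ} (A : Fin m → Matrix (Fin n) (Fin n) ℝ) (y : Fin m → ℝ)
    (X : Matrix (Fin n) (Fin n) ℝ) : frob (∑ i, y i • A i) X = ∑ i, y i * frob (A i) X := by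
  simp only [frob, transpose_sum, transpose_smul, Matrix.sum_mul, trace_sum, Matrix.smul_mul,
    trace_smul, smul_eq_mul]

lemma isSymm_sum_smul {n m : ℕ} {A : Fin m → Matrix (Fin n) (Fin n) ℝ} (hA : ∀ i, (A i).IsSymm)
    (y : Fin m → ℝ) : (∑ i, y i • A i).IsSymm :=
  Finset.sum_induction _ IsSymm (fun _ _ => IsSymm.add) isSymm_zero fun i _ =>
    (hA i).smul (y i)

lemma penDual_zero {n m : ℕ} (A : Fin m → Matrix (Fin n) (Fin n) ℝ) (b : Fin m → ℝ) (α : ℝ) :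
    penDual A b α 0 = 0 := by
  simp [penDual, lambdaMax_zero]

theorem penDual_zero_is_minimizer_of_feasible_general {n m : ℕ}
    (A : Fin m → Matrix (Fin n) (Fin n) ℝ) (hA : ∀ i, (A i).IsSymm)
    (b : Fin m → ℝ) (α : ℝ)
    (hfeas : ∃ X : Matrix (Fin n) (Fin n) ℝ,
      X.PosSemidef ∧ (∀ i, frob (A i) X = b i) ∧ X.trace ≤ α) :
    ∀ y : Fin m → ℝ, penDual A b α 0 ≤ penDual A b α y := by
  obtain ⟨X, hX, hAX, htr⟩ := hfeas
  intro y
  set S := ∑ i, y i • A i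
  have hS : S.IsSymm := isSymm_sum_smul hA y
  have hb : b ⬝ᵥ y = (S * X).trace := by
    rw [← frob_eq_trace_mul hS, frob_sum_smul_left, dotProduct]
    simp only [hAX, mul_comm]
  set t := max (lambdaMax (-S)) 0
  have hduality : -(S * X).trace ≤ t * α := calc
    -(S * X).trace = (-S * X).trace := by rw [Matrix.neg_mul, trace_neg]
    _ ≤ lambdaMax (-S) * X.trace :=
        trace_mul_le_lambdaMax_mul_trace (isHermitian_iff_isSymm.mpr hS.neg) hX
    _ ≤ t * X.trace := mul_le_mul_of_nonneg_right (le_max_left _ _) hX.trace_nonneg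
    _ ≤ t * α := mul_le_mul_of_nonneg_left htr (le_max_right _ _)
  rw [penDual_zero, penDual, hb]
  linarith

/-- if there exists a real symmetric positive semidefinite `X` with
`𝒜X = b` and `tr(X) ≤ α`, then `y = 0` is a global minimizer of the penalized dual
objective `f`. -/
theorem penDual_zero_is_minimizer_of_feasible {n m : ℕ} (hn : 0 < n) (hm : 0 < m)
    (A : Fin m → Matrix (Fin n) (Fin n) ℝ) (hA : ∀ i, (A i).IsSymm)
    (b : Fin m → ℝ) (α : ℝ) (hα : 0 < α)
    (hfeas : ∃ X : Matrix (Fin n) (Fin n) ℝ,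
      X.PosSemidef ∧ (∀ i, frob (A i) X = b i) ∧ X.trace ≤ α) :
    ∀ y : Fin m → ℝ, penDual A b α 0 ≤ penDual A b α y :=
  penDual_zero_is_minimizer_of_feasible_general A hA b α hfeas
end

section
/- Let f : ℝ^m → ℝ be convex with a global minimizer y⋆, let ρ > 0, and let y_t ∈ ℝ^m with y_t ≠ y⋆. Define the proximal gap Δ_t := f(y_t) − inf_{y ∈ ℝ^m} ( f(y) + (ρ/2)‖y − y_t‖² ). Then Δ_t ≥ (1/(2ρ)) · ((f(y_t) − f(y⋆)) / ‖y_t − y⋆‖)² whenever f(y_t) − f(y⋆) ≤ ρ‖y_t − y⋆‖², and Δ_t ≥ f(y_t) − f(y⋆) − (ρ/2)‖y_t − y⋆‖² otherwise. -/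
open scoped RealInnerProductSpace

/-- lower bound on the proximal gap
`Δ_t := f(y_t) − inf_y ( f(y) + (ρ/2)‖y − y_t‖² )` for a convex `f` with global
minimizer `y⋆` and `y_t ≠ y⋆`. -/
theorem proximal_gap_lower_bound {m : ℕ} (ρ : ℝ) (hρ : 0 < ρ)
    (f : EuclideanSpace ℝ (Fin m) → ℝ) (hconv : ConvexOn ℝ Set.univ f)
    (ystar yt : EuclideanSpace ℝ (Fin m))
    (hmin : ∀ y, f ystar ≤ f y) (hne : yt ≠ ystar) :
    (f yt - f ystar ≤ ρ * ‖yt - ystar‖ ^ 2 →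
      1 / (2 * ρ) * ((f yt - f ystar) / ‖yt - ystar‖) ^ 2 ≤
        f yt - ⨅ y : EuclideanSpace ℝ (Fin m), (f y + ρ / 2 * ‖y - yt‖ ^ 2)) ∧
    (ρ * ‖yt - ystar‖ ^ 2 < f yt - f ystar →
      f yt - f ystar - ρ / 2 * ‖yt - ystar‖ ^ 2 ≤
        f yt - ⨅ y : EuclideanSpace ℝ (Fin m), (f y + ρ / 2 * ‖y - yt‖ ^ 2)) := by
  have hr : 0 < ‖yt - ystar‖ := norm_pos_iff.mpr (sub_ne_zero.mpr hne)
  set r : ℝ := ‖yt - ystar‖ with hr_def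
  set D : ℝ := f yt - f ystar with hD_def
  have hD0 : 0 ≤ D := sub_nonneg.mpr (hmin yt)
  have hbdd : BddBelow (Set.range fun y => f y + ρ / 2 * ‖y - yt‖ ^ 2) := by
    refine ⟨f ystar, ?_⟩
    rintro _ ⟨y, rfl⟩
    have h1 := hmin y
    have h2 : 0 ≤ ρ / 2 * ‖y - yt‖ ^ 2 := by positivity
    dsimp; linarith
  have key : ∀ z, f yt - (f z + ρ / 2 * ‖z - yt‖ ^ 2) ≤
      f yt - ⨅ y : EuclideanSpace ℝ (Fin m), (f y + ρ / 2 * ‖y - yt‖ ^ 2) :=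
    fun z => sub_le_sub_left (ciInf_le hbdd z) _
  constructor
  · intro hcase
    set lam : ℝ := D / (ρ * r ^ 2) with hlam_def
    have hlam0 : 0 ≤ lam := by positivity
    have hlam1 : lam ≤ 1 := by
      rw [hlam_def, div_le_one (by positivity)]; exact hcase
    set z : EuclideanSpace ℝ (Fin m) := yt + lam • (ystar - yt) with hz_def
    have hzconv : z = (1 - lam) • yt + lam • ystar := by module
    have hfz : f z ≤ (1 - lam) * f yt + lam * f ystar := by
      rw [hzconv]
      exact hconv.2 (Set.mem_univ yt) (Set.mem_univ ystar)
        (by linarith) hlam0 (by ring)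
    have hnz : ‖z - yt‖ = lam * r := by
      have : z - yt = lam • (ystar - yt) := by rw [hz_def]; abel
      rw [this, norm_smul, Real.norm_eq_abs, abs_of_nonneg hlam0,
        hr_def, norm_sub_rev]
    have h1 := key z
    rw [hnz] at h1
    have heq : 1 / (2 * ρ) * (D / r) ^ 2 =
        f yt - ((1 - lam) * f yt + lam * f ystar + ρ / 2 * (lam * r) ^ 2) := by
      rw [hlam_def, hD_def]
      field_simp
      ring
    have h2 : 0 ≤ ρ / 2 := by positivity
    nlinarith [sq_nonneg (lam * r)]
  · intro hcase
    have h1 := key ystar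
    rw [norm_sub_rev, ← hr_def] at h1
    linarith
end

section
/- Let f : ℝ^m → ℝ be convex with a global minimizer y⋆, let y_t ∈ ℝ^m with y_t ≠ y⋆ and f(y_t) > f(y⋆), let λ > 0, and set ρ := λ·(f(y_t) − f(y⋆))/‖y_t − y⋆‖². Then the proximal gap Δ_t := f(y_t) − inf_{y} ( f(y) + (ρ/2)‖y − y_t‖² ) satisfies Δ_t ≥ (1/(2λ))·(f(y_t) − f(y⋆)) if λ > 1, and Δ_t ≥ (1/2)·(f(y_t) − f(y⋆)) if λ ≤ 1. -/
open scoped RealInnerProductSpace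

/-- with the proximal parameter `ρ = λ·(f(y_t) − f(y⋆))/‖y_t − y⋆‖²`,
the proximal gap `Δ_t := f(y_t) − inf_y ( f(y) + (ρ/2)‖y − y_t‖² )` satisfies
`Δ_t ≥ (1/(2λ))·(f(y_t) − f(y⋆))` if `λ > 1` and `Δ_t ≥ (1/2)·(f(y_t) − f(y⋆))` if `λ ≤ 1`. -/
theorem proximal_gap_simplified_bound {m : ℕ}
    (f : EuclideanSpace ℝ (Fin m) → ℝ) (hconv : ConvexOn ℝ Set.univ f)
    (ystar yt : EuclideanSpace ℝ (Fin m))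
    (hmin : ∀ y, f ystar ≤ f y) (hne : yt ≠ ystar) (hgt : f ystar < f yt)
    (lam ρ : ℝ) (hlam : 0 < lam)
    (hρ : ρ = lam * (f yt - f ystar) / ‖yt - ystar‖ ^ 2) :
    (1 < lam →
      1 / (2 * lam) * (f yt - f ystar) ≤
        f yt - ⨅ y : EuclideanSpace ℝ (Fin m), (f y + ρ / 2 * ‖y - yt‖ ^ 2)) ∧
    (lam ≤ 1 →
      1 / 2 * (f yt - f ystar) ≤
        f yt - ⨅ y : EuclideanSpace ℝ (Fin m), (f y + ρ / 2 * ‖y - yt‖ ^ 2)) := by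
  set D : ℝ := f yt - f ystar with hD
  have hDpos : 0 < D := by simp [hD]; linarith
  have hnpos : (0:ℝ) < ‖yt - ystar‖ := by
    rw [norm_pos_iff]; exact sub_ne_zero.mpr hne
  have hn2 : (0:ℝ) < ‖yt - ystar‖ ^ 2 := by positivity
  have hρpos : 0 < ρ := by rw [hρ]; positivity
  have hρn : ρ * ‖yt - ystar‖ ^ 2 = lam * D := by
    rw [hρ]; field_simp
  have hbdd : BddBelow (Set.range fun y => f y + ρ / 2 * ‖y - yt‖ ^ 2) := by
    refine ⟨f ystar, ?_⟩
    rintro x ⟨y, rfl⟩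
    have := hmin y
    nlinarith [sq_nonneg ‖y - yt‖]
  -- key inequality for any θ ∈ [0,1]
  have key : ∀ θ : ℝ, 0 ≤ θ → θ ≤ 1 →
      θ * D - lam * D * θ ^ 2 / 2 ≤
        f yt - ⨅ y : EuclideanSpace ℝ (Fin m), (f y + ρ / 2 * ‖y - yt‖ ^ 2) := by
    intro θ h0 h1
    set z : EuclideanSpace ℝ (Fin m) := (1 - θ) • yt + θ • ystar with hz
    have hzsub : z - yt = θ • (ystar - yt) := by
      rw [hz]; module
    have hfz : f z ≤ (1 - θ) * f yt + θ * f ystar := by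
      exact hconv.2 (Set.mem_univ yt) (Set.mem_univ ystar) (by linarith) h0 (by ring)
    have hinf : (⨅ y : EuclideanSpace ℝ (Fin m), (f y + ρ / 2 * ‖y - yt‖ ^ 2)) ≤
        f z + ρ / 2 * ‖z - yt‖ ^ 2 := ciInf_le hbdd z
    have hnorm : ‖z - yt‖ ^ 2 = θ ^ 2 * ‖yt - ystar‖ ^ 2 := by
      rw [hzsub, norm_smul, Real.norm_eq_abs, abs_of_nonneg h0, norm_sub_rev]
      ring
    have : f z + ρ / 2 * ‖z - yt‖ ^ 2 ≤
        f yt - θ * D + lam * D * θ ^ 2 / 2 := by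
      rw [hnorm]
      have : ρ / 2 * (θ ^ 2 * ‖yt - ystar‖ ^ 2) = lam * D * θ ^ 2 / 2 := by
        linear_combination (θ ^ 2 / 2) * hρn
      rw [this]
      simp only [hD] at *
      nlinarith
    linarith
  constructor
  · intro hl1
    have := key (1 / lam) (by positivity) (by
      rw [div_le_one hlam]; linarith)
    have heq : (1 / lam) * D - lam * D * (1 / lam) ^ 2 / 2 = 1 / (2 * lam) * D := by
      field_simp; ring
    linarith [heq ▸ this]
  · intro hl1
    have := key 1 zero_le_one le_rfl
    nlinarith
end
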